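/- For integers n > 2k + t + 2, k > 2t + 1, q ≥ 3: θ_k + Σ_{j=0}^{k-t-2} [k-t+1 choose j+1]_q · q^{(k-t-j)(k-t-j-1)} · [n-k-1 choose k-t-j-1]_q > q^2·θ_{t-1}·[n-t-1 choose k-t-1]_q + (θ_{k-t})^2·[n-t-2 choose k-t-2]_q + θ_{k-t-1}·[n-t-1 choose k-t-1]_q. -/

import Mathlib

/-!
Put `s = k - t - 2` and `b = n - k - 1`, so that `b ≥ s + 6`. Of the sum only the term `j = 0`,
`θ_{s+2} q^{(s+2)(s+1)} [b, s+1]_q`, is needed. The Gaussian binomials on the left are compared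
with `[b, ·]_q` through `(1 - 1/((q-1) q^{b-m})) [b+d, m]_q ≤ q^{dm} [b, m]_q`, which follows
factor by factor from the Weierstrass product inequality and a geometric sum. As
`q²θ_{t-1} + θ_{s+1} ≤ 2θ_{s+1} ≤ (2/3)θ_{s+2}`, the first and third terms on the left are at
most `3/4` of the `j = 0` term; the middle term is smaller than it by a factor of order
`q^{s-b}`, hence at most `1/4` of it.
-/

/-- Gaussian binomial coefficient `[n choose k]_q` as a real number,
with the convention that it is `0` for `k < 0` (and for `k > n`). -/
noncomputable def gbin (q n : ℕ) (k : ℤ) : ℝ :=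
  if 0 ≤ k then ∏ i ∈ Finset.range k.toNat, ((q:ℝ)^(n-i) - 1)/((q:ℝ)^(i+1) - 1) else 0

/-- `θ_m = (q^{m+1}-1)/(q-1)`, the number of points of `PG(m,q)`. -/
noncomputable def theta (q m : ℕ) : ℝ := ((q:ℝ)^(m+1) - 1)/((q:ℝ) - 1)

open Finset

theorem Finset.one_sub_sum_le_prod_one_sub {ι R : Type*} [CommRing R] [LinearOrder R]
    [IsStrictOrderedRing R] (s : Finset ι) {f : ι → R}
    (hf₀ : ∀ i ∈ s, 0 ≤ f i) (hf₁ : ∀ i ∈ s, f i ≤ 1) :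
    1 - ∑ i ∈ s, f i ≤ ∏ i ∈ s, (1 - f i) := by
  classical
  induction s using Finset.induction_on with
  | empty => simp
  | insert a s ha ih =>
    rw [sum_insert ha, prod_insert ha]
    have ih' := ih (fun i hi => hf₀ i (mem_insert_of_mem hi))
      (fun i hi => hf₁ i (mem_insert_of_mem hi))
    have hs : 0 ≤ ∑ i ∈ s, f i := sum_nonneg fun i hi => hf₀ i (mem_insert_of_mem hi)
    have ha₀ := hf₀ a (mem_insert_self a s)
    have ha₁ := hf₁ a (mem_insert_self a s)
    nlinarith [mul_le_mul_of_nonneg_left ih' (sub_nonneg.2 ha₁), mul_nonneg ha₀ hs]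

theorem mul_sub_one_mul_one_sub_inv_le {x : ℝ} (hx : 1 ≤ x) (y : ℝ) :
    (x * y - 1) * (1 - x⁻¹) ≤ y * (x - 1) := by
  have hxx : x * x⁻¹ = 1 := mul_inv_cancel₀ (by positivity)
  have hx' : x⁻¹ ≤ 1 := inv_le_one_of_one_le₀ hx
  have h : (x * y - 1) * (1 - x⁻¹) = y * (x - 1) - (1 - x⁻¹) := by
    linear_combination (-y) * hxx
  linarith

theorem gbin_natCast (q a m : ℕ) :
    gbin q a m = ∏ i ∈ range m, ((q:ℝ)^(a-i) - 1)/((q:ℝ)^(i+1) - 1) := by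
  simp [gbin]

theorem gbin_nonneg {q : ℕ} (hq : 1 ≤ q) (a : ℕ) (k : ℤ) : 0 ≤ gbin q a k := by
  have hq' : (1:ℝ) ≤ q := by exact_mod_cast hq
  unfold gbin
  split_ifs
  · exact prod_nonneg fun i _ =>
      div_nonneg (sub_nonneg.2 (one_le_pow₀ hq')) (sub_nonneg.2 (one_le_pow₀ hq'))
  · exact le_rfl

theorem gbin_one (q a : ℕ) : gbin q (a+1) 1 = theta q a := by
  simp [gbin, theta]

theorem gbin_succ_mul {q : ℕ} (hq : 1 < q) (a m : ℕ) :
    gbin q a (m+1 : ℕ) * ((q:ℝ)^(m+1) - 1) = gbin q a m * ((q:ℝ)^(a-m) - 1) := by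
  have : (q:ℝ)^(m+1) - 1 ≠ 0 := sub_ne_zero.2 (one_lt_pow₀ (by exact_mod_cast hq) (by omega)).ne'
  rw [gbin_natCast, gbin_natCast, prod_range_succ, mul_assoc, div_mul_cancel₀ _ this]

theorem gbin_add_le {q : ℕ} (hq : 1 < q) {b m : ℕ} (hmb : m ≤ b) (d : ℕ) :
    (1 - 1 / (((q:ℝ) - 1) * (q:ℝ)^(b-m))) * gbin q (b+d) m ≤ (q:ℝ)^(d*m) * gbin q b m := by
  have hq₁ : (1:ℝ) < q := by exact_mod_cast hq
  have hq₀ : (0:ℝ) < q := by linarith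
  have hsplit : ∀ i ≤ b, (q:ℝ)^b = (q:ℝ)^i * (q:ℝ)^(b-i) := fun i hi => by
    rw [← pow_add, Nat.add_sub_cancel' hi]
  have hsum : ∑ i ∈ range m, (q:ℝ)^i / (q:ℝ)^b ≤ 1 / (((q:ℝ) - 1) * (q:ℝ)^(b-m)) := by
    rw [← sum_div, geom_sum_eq hq₁.ne', hsplit m hmb, div_div, div_le_div_iff₀ (by positivity)
      (by have := sub_pos.2 hq₁; positivity)]
    nlinarith [sub_pos.2 hq₁, pow_pos hq₀ m, pow_pos hq₀ (b-m)]
  have hle_one : ∀ i ∈ range m, (q:ℝ)^i / (q:ℝ)^b ≤ 1 := fun i hi =>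
    div_le_one_of_le₀ (pow_le_pow_right₀ hq₁.le (by simp at hi; omega)) (by positivity)
  have hprod := one_sub_sum_le_prod_one_sub (range m) (fun i _ => by positivity) hle_one
  have hfactor : ∀ i ∈ range m,
      ((q:ℝ)^(b+d-i) - 1)/((q:ℝ)^(i+1) - 1) * (1 - (q:ℝ)^i / (q:ℝ)^b) ≤
        (q:ℝ)^d * (((q:ℝ)^(b-i) - 1)/((q:ℝ)^(i+1) - 1)) := by
    intro i hi
    have hib : i ≤ b := by simp at hi; omega
    rw [show b + d - i = (b - i) + d by omega, pow_add, hsplit i hib,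
      div_mul_cancel_left₀ (pow_pos hq₀ i).ne', div_mul_eq_mul_div, mul_div_assoc']
    exact div_le_div_of_nonneg_right
      (mul_sub_one_mul_one_sub_inv_le (one_le_pow₀ hq₁.le) _)
      (sub_nonneg.2 (one_le_pow₀ hq₁.le))
  calc (1 - 1 / (((q:ℝ) - 1) * (q:ℝ)^(b-m))) * gbin q (b+d) m
      ≤ (∏ i ∈ range m, (1 - (q:ℝ)^i / (q:ℝ)^b)) * gbin q (b+d) m :=
        mul_le_mul_of_nonneg_right (by linarith) (gbin_nonneg hq.le _ _)
    _ = ∏ i ∈ range m, ((q:ℝ)^(b+d-i) - 1)/((q:ℝ)^(i+1) - 1) * (1 - (q:ℝ)^i / (q:ℝ)^b) := by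
        rw [gbin_natCast, mul_comm, ← prod_mul_distrib]
    _ ≤ ∏ i ∈ range m, (q:ℝ)^d * (((q:ℝ)^(b-i) - 1)/((q:ℝ)^(i+1) - 1)) := by
        refine prod_le_prod (fun i hi => mul_nonneg ?_ (sub_nonneg.2 (hle_one i hi))) hfactor
        exact div_nonneg (sub_nonneg.2 (one_le_pow₀ hq₁.le)) (sub_nonneg.2 (one_le_pow₀ hq₁.le))
    _ = (q:ℝ)^(d*m) * gbin q b m := by
        rw [prod_mul_distrib, prod_const, card_range, gbin_natCast, pow_mul]

theorem gbin_add_le_of_add_four_le {q : ℕ} (hq : 2 ≤ q) {b m : ℕ} (hmb : m + 4 ≤ b) (d : ℕ) :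
    15/16 * gbin q (b+d) m ≤ (q:ℝ)^(d*m) * gbin q b m := by
  have hq₁ : (1:ℝ) ≤ (q:ℝ) - 1 := by
    have : (2:ℝ) ≤ q := by exact_mod_cast hq
    linarith
  have hpow : (16:ℝ) ≤ ((q:ℝ) - 1) * (q:ℝ)^(b-m) := calc
    (16:ℝ) = 1 * 2^4 := by norm_num
    _ ≤ ((q:ℝ) - 1) * (q:ℝ)^(b-m) := by
      gcongr
      calc (2:ℝ)^4 ≤ (q:ℝ)^4 := by gcongr; exact_mod_cast hq
        _ ≤ (q:ℝ)^(b-m) := pow_le_pow_right₀ (by linarith) (by omega)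
  have hc : 15/16 ≤ 1 - 1 / (((q:ℝ) - 1) * (q:ℝ)^(b-m)) := by
    have : 1 / (((q:ℝ) - 1) * (q:ℝ)^(b-m)) ≤ 1/16 :=
      one_div_le_one_div_of_le (by norm_num) hpow
    linarith
  exact (mul_le_mul_of_nonneg_right hc (gbin_nonneg (by omega) _ _)).trans
    (gbin_add_le (by omega) (by omega) d)

theorem theta_succ {q : ℕ} (hq : 1 < q) (m : ℕ) : theta q (m+1) = q * theta q m + 1 := by
  have : (q:ℝ) - 1 ≠ 0 := sub_ne_zero.2 (by exact_mod_cast hq.ne')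
  unfold theta
  field_simp
  ring

theorem theta_pos {q : ℕ} (hq : 1 < q) (m : ℕ) : 0 < theta q m := by
  have hq₁ : (1:ℝ) < q := by exact_mod_cast hq
  exact div_pos (sub_pos.2 (one_lt_pow₀ hq₁ m.succ_ne_zero)) (sub_pos.2 hq₁)

theorem theta_mono {q : ℕ} (hq : 1 < q) : Monotone (theta q) := fun a b hab => by
  have hq₁ : (1:ℝ) < q := by exact_mod_cast hq
  unfold theta
  gcongr
  linarith

theorem sq_mul_theta_pred_add_theta_le {q t m : ℕ} (hq : 1 < q) (ht : 0 < t) (htm : t + 1 ≤ m) :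
    (q:ℝ)^2 * theta q (t-1) + theta q m ≤ 2 * theta q m := by
  obtain ⟨t, rfl⟩ : ∃ t', t = t' + 1 := ⟨t - 1, by omega⟩
  have h := theta_mono hq htm
  rw [theta_succ hq, theta_succ hq] at h
  have := (theta_pos hq t).le
  simp only [Nat.add_sub_cancel]
  nlinarith

theorem sq_mul_theta_add_theta_mul_gbin_le {q t s b : ℕ} (hq : 3 ≤ q) (ht : 0 < t) (hts : t ≤ s)
    (hsb : s + 5 ≤ b) :
    ((q:ℝ)^2 * theta q (t-1) + theta q (s+1)) * gbin q (b + (s+2)) (s+1 : ℕ) ≤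
      3/4 * (theta q (s+2) * (q:ℝ)^((s+2)*(s+1)) * gbin q b (s+1 : ℕ)) := by
  have hA := sq_mul_theta_pred_add_theta_le (q := q) (by omega) ht (show t + 1 ≤ s + 1 by omega)
  have hratio := gbin_add_le_of_add_four_le (q := q) (by omega) (show s + 1 + 4 ≤ b by omega) (s+2)
  have hθ : 3 * theta q (s+1) ≤ theta q (s+2) := by
    have : (3:ℝ) ≤ q := by exact_mod_cast hq
    rw [theta_succ (by omega) (s+1)]
    nlinarith [theta_pos (show 1 < q by omega) (s+1)]
  have hg := gbin_nonneg (show 1 ≤ q by omega) (b + (s+2)) (s+1 : ℕ)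
  have hG : 0 ≤ (q:ℝ)^((s+2)*(s+1)) * gbin q b (s+1 : ℕ) :=
    mul_nonneg (by positivity) (gbin_nonneg (by omega) _ _)
  have hθ₀ := (theta_pos (show 1 < q by omega) (s+1)).le
  calc ((q:ℝ)^2 * theta q (t-1) + theta q (s+1)) * gbin q (b + (s+2)) (s+1 : ℕ)
      ≤ (2 * theta q (s+1)) * gbin q (b + (s+2)) (s+1 : ℕ) := mul_le_mul_of_nonneg_right hA hg
    _ ≤ (2/3 * theta q (s+2)) * (16/15 * ((q:ℝ)^((s+2)*(s+1)) * gbin q b (s+1 : ℕ))) :=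
        mul_le_mul (by linarith) (by linarith) hg (by linarith)
    _ ≤ 3/4 * (theta q (s+2) * (q:ℝ)^((s+2)*(s+1)) * gbin q b (s+1 : ℕ)) := by
        nlinarith [mul_nonneg hθ₀ hG]

theorem theta_mul_gbin_le {q s b : ℕ} (hq : 3 ≤ q) (hsb : s + 6 ≤ b) :
    theta q (s+2) * gbin q (b + (s+1)) s ≤
      1/4 * ((q:ℝ)^((s+2)*(s+1)) * gbin q b (s+1 : ℕ)) := by
  have hq₃ : (3:ℝ) ≤ q := by exact_mod_cast hq
  set P := (q:ℝ)^((s+1)*s)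
  set u := (q:ℝ)^(s+1)
  set w := (q:ℝ)^(b-s)
  set g₀ := gbin q b (s+1 : ℕ)
  set r := gbin q b s
  have hratio : 15/16 * gbin q (b + (s+1)) s ≤ P * r :=
    gbin_add_le_of_add_four_le (by omega) (by omega) (s+1)
  have hsucc : g₀ * (u - 1) = r * (w - 1) := gbin_succ_mul (by omega) b s
  have hθ : theta q (s+2) * ((q:ℝ) - 1) = (q:ℝ)^2 * u - 1 := by
    rw [theta, div_mul_cancel₀ _ (by linarith), ← pow_add]
    ring_nf
  have hpow : (q:ℝ)^((s+2)*(s+1)) = P * u^2 := by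
    rw [← pow_mul, ← pow_add]; ring_nf
  have hw : (q:ℝ)^6 ≤ w := pow_le_pow_right₀ (by linarith) (by omega)
  have hw₁ : 1 ≤ w := one_le_pow₀ (by linarith)
  have hq6 : 81 * (q:ℝ)^2 ≤ (q:ℝ)^6 := by nlinarith [pow_le_pow_left₀ (by norm_num) hq₃ 4]
  have hD : 64/15 * (q:ℝ)^2 ≤ ((q:ℝ) - 1) * (w - 1) := by nlinarith
  have hg₂ := gbin_nonneg (show 1 ≤ q by omega) (b + (s+1)) s
  have hg₀ : 0 ≤ g₀ := gbin_nonneg (by omega) _ _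
  have hX : 0 ≤ P * u^2 * g₀ := mul_nonneg (by positivity) hg₀
  rw [hpow]
  refine le_of_mul_le_mul_right ?_ (show 0 < ((q:ℝ) - 1) * (w - 1) by nlinarith)
  calc theta q (s+2) * gbin q (b + (s+1)) s * (((q:ℝ) - 1) * (w - 1))
      = theta q (s+2) * ((q:ℝ) - 1) * (16/15) * (15/16 * gbin q (b + (s+1)) s) * (w - 1) := by
        ring
    _ ≤ ((q:ℝ)^2 * u) * (16/15) * (P * r) * (w - 1) := by
        rw [hθ]
        gcongr
        linarith
    _ = 16/15 * (q:ℝ)^2 * P * u * (g₀ * (u - 1)) := by rw [hsucc]; ring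
    _ ≤ 16/15 * (q:ℝ)^2 * (P * u^2 * g₀) := by
        nlinarith [mul_nonneg (by positivity : (0:ℝ) ≤ 16/15 * (q:ℝ)^2 * P * u) hg₀]
    _ ≤ 1/4 * (P * u^2 * g₀) * (((q:ℝ) - 1) * (w - 1)) := by
        nlinarith [mul_le_mul_of_nonneg_right hD hX]

theorem stmt_19 (q n k t : ℕ) (hn : 2*k + t + 2 < n) (hk : 2*t + 1 < k) (ht : 0 < t)
    (hq : 3 ≤ q) :
    (q:ℝ)^2 * theta q (t-1) * gbin q (n-t-1) ((k:ℤ)-t-1) +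
      (theta q (k-t))^2 * gbin q (n-t-2) ((k:ℤ)-t-2) +
      theta q (k-t-1) * gbin q (n-t-1) ((k:ℤ)-t-1)
    < theta q k + ∑ j ∈ Finset.range (k-t-1),
        gbin q (k-t+1) ((j:ℤ)+1) * (q:ℝ)^((k-t-j)*(k-t-j-1)) *
          gbin q (n-k-1) ((k:ℤ)-t-j-1) := by
  obtain ⟨s, rfl⟩ : ∃ s, k = t + s + 2 := ⟨k - t - 2, by omega⟩
  obtain ⟨b, rfl⟩ : ∃ b, n = t + s + b + 3 := ⟨n - t - s - 3, by omega⟩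
  have hq₁ : 1 < q := by omega
  rw [show t+s+b+3-t-1 = b+(s+2) by omega, show t+s+b+3-t-2 = b+(s+1) by omega,
    show t+s+b+3-(t+s+2)-1 = b by omega, show t+s+2-t-1 = s+1 by omega,
    show t+s+2-t = s+2 by omega, show ((t+s+2:ℕ):ℤ)-t-1 = ((s+1:ℕ):ℤ) by push_cast; ring,
    show ((t+s+2:ℕ):ℤ)-t-2 = ((s:ℕ):ℤ) by push_cast; ring]
  have hfirst : theta q (s+2) * (q:ℝ)^((s+2)*(s+1)) * gbin q b (s+1:ℕ) ≤
      ∑ j ∈ range (s+1), gbin q (s+2+1) ((j:ℤ)+1) * (q:ℝ)^((s+2-j)*(s+2-j-1)) *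
        gbin q b (((t+s+2:ℕ):ℤ)-t-j-1) := by
    refine le_of_eq_of_le ?_ (single_le_sum (fun j _ => mul_nonneg (mul_nonneg
      (gbin_nonneg hq₁.le _ _) (by positivity)) (gbin_nonneg hq₁.le _ _))
      (mem_range.2 s.succ_pos))
    rw [← gbin_one]
    push_cast
    ring_nf
  have hA := sq_mul_theta_add_theta_mul_gbin_le hq ht (show t ≤ s by omega)
    (show s + 5 ≤ b by omega)
  have hB := mul_le_mul_of_nonneg_left (theta_mul_gbin_le (q := q) hq (show s + 6 ≤ b by omega))
    (theta_pos hq₁ (s+2)).le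
  have hθ := theta_pos hq₁ (t+s+2)
  linarith
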